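/- Majorant for the gravitational acceleration (Lemma 3.1): Let q_1,…,q_N ∈ ℝ³[[t]] be the formal power series solution of the N-body equations with initial positions q_i⁰ satisfying q_i⁰ ≠ q_j⁰ for i ≠ j. Suppose ρ = 1 + Σ_{k≥1} ρ_k t^k ∈ ℝ₊[[t]] satisfies q_i − q_j ⊴ ‖q_i⁰ − q_j⁰‖·ρ for all 1 ≤ i < j ≤ N. Then for each i, g_i(q) := Σ_{j≠i} G m_j ‖q_i − q_j‖⁻³ (q_j − q_i) satisfies g_i(q) ⊴ K_i(q⁰)·ρ·(2 − ρ²)^{−3/2}, where K_i(q⁰) = Σ_{j≠i} G m_j / ‖q_i⁰ − q_j⁰‖². -/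

import Mathlib

open scoped RealInnerProductSpace
open Finset

noncomputable section

/-- `p = g^ν` formally: `p₀ = 1` and the recurrence coming from `p'·g = ν·p·g'`. -/
def IsFPow (g p : ℕ → ℝ) (ν : ℝ) : Prop :=
  p 0 = 1 ∧ ∀ k : ℕ, 1 ≤ k →
    p k = (1 / (k : ℝ)) *
      ∑ j ∈ Finset.range k, ((((k - j : ℕ) : ℝ)) * ν - (j : ℝ)) * g (k - j) * p j

/-- Cauchy product of two scalar power series (coefficientwise). -/
def cauchy (a b : ℕ → ℝ) (k : ℕ) : ℝ := ∑ j ∈ Finset.range (k + 1), a j * b (k - j)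

/-- `K_i(q⁰) = Σ_{j≠i} G m_j / ‖q_i⁰ − q_j⁰‖²`. -/
def Kcoef {N : ℕ} (G : ℝ) (m : Fin N → ℝ) (q0 : Fin N → EuclideanSpace ℝ (Fin 3))
    (i : Fin N) : ℝ :=
  ∑ j ∈ Finset.univ.erase i, G * m j / ‖q0 i - q0 j‖ ^ 2

/-!
Write `‖q_i − q_j‖² / ‖q_i⁰ − q_j⁰‖² = 1 + u`. By Cauchy–Schwarz and the hypothesis on `ρ`,
`|u_k| ≤ (ρ²)_k` for `k ≥ 1`, i.e. `u` is majorized by the nonconstant part of `−(2 − ρ²)`.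
For an exponent `ν ≤ 0` all coefficients `(k − j)ν − j` of the recurrence defining `h^ν` are
nonpositive, so by induction on `k` this majorization passes to the powers:
`(1 + u)^{−3/2} ⊴ (2 − ρ²)^{−3/2}`. Multiplying by `q_j − q_i ⊴ ‖q_i⁰ − q_j⁰‖ ρ` and summing
over `j` gives the bound.
-/

lemma cauchy_comm (a b : ℕ → ℝ) (k : ℕ) : cauchy a b k = cauchy b a k := by
  unfold cauchy
  rw [← sum_range_reflect]
  refine sum_congr rfl fun j hj => ?_
  rw [mem_range] at hj
  rw [show k + 1 - 1 - j = k - j by omega, show k - (k - j) = j by omega, mul_comm]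

lemma cauchy_const_mul_left (c : ℝ) (a b : ℕ → ℝ) (k : ℕ) :
    cauchy (fun j => c * a j) b k = c * cauchy a b k := by
  simp only [cauchy, mul_sum, mul_assoc]

lemma cauchy_const_mul_right (c : ℝ) (a b : ℕ → ℝ) (k : ℕ) :
    cauchy a (fun j => c * b j) k = c * cauchy a b k := by
  rw [cauchy_comm, cauchy_const_mul_left, cauchy_comm]

lemma abs_mul_mul_le_of_nonpos {c x y X Y : ℝ} (hc : c ≤ 0) (hx : |x| ≤ -X) (hy : |y| ≤ Y) :
    |c * x * y| ≤ c * X * Y := by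
  rw [abs_mul, abs_mul, abs_of_nonpos hc, show c * X * Y = -c * -X * Y by ring]
  exact mul_le_mul (mul_le_mul_of_nonneg_left hx (neg_nonneg.2 hc)) hy (abs_nonneg _)
    (mul_nonneg (neg_nonneg.2 hc) ((abs_nonneg _).trans hx))

theorem IsFPow.abs_le {g h p P : ℕ → ℝ} {ν : ℝ} (hν : ν ≤ 0)
    (hp : IsFPow g p ν) (hP : IsFPow h P ν) (hgh : ∀ k, 1 ≤ k → |g k| ≤ -h k) (k : ℕ) :
    |p k| ≤ P k := by
  induction k using Nat.strong_induction_on with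
  | _ k ih =>
  rcases Nat.eq_zero_or_pos k with rfl | hk
  · simp [hp.1, hP.1]
  rw [hp.2 k hk, hP.2 k hk, abs_mul, abs_of_nonneg (by positivity)]
  refine mul_le_mul_of_nonneg_left ((abs_sum_le_sum_abs _ _).trans
    (sum_le_sum fun j hj => ?_)) (by positivity)
  rw [mem_range] at hj
  have hcoef : ((k - j : ℕ) : ℝ) * ν - j ≤ 0 := by
    nlinarith [(Nat.cast_nonneg (k - j) : (0 : ℝ) ≤ _), (Nat.cast_nonneg j : (0 : ℝ) ≤ _)]
  exact abs_mul_mul_le_of_nonpos hcoef (hgh _ (by omega)) (ih j hj)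

section Majorants

variable {E : Type*} [SeminormedAddCommGroup E]

lemma norm_sum_smul_le_cauchy [NormedSpace ℝ E] {w W Y : ℕ → ℝ} {y : ℕ → E}
    (hw : ∀ a, |w a| ≤ W a) (hy : ∀ a, ‖y a‖ ≤ Y a) (k : ℕ) :
    ‖∑ a ∈ range (k + 1), w a • y (k - a)‖ ≤ cauchy W Y k := by
  refine (norm_sum_le _ _).trans (sum_le_sum fun a _ => ?_)
  rw [norm_smul, Real.norm_eq_abs]
  exact mul_le_mul (hw a) (hy _) (norm_nonneg _) ((abs_nonneg _).trans (hw a))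

lemma abs_sum_inner_le_cauchy [InnerProductSpace ℝ E] {X Y : ℕ → ℝ} {x y : ℕ → E}
    (hx : ∀ a, ‖x a‖ ≤ X a) (hy : ∀ a, ‖y a‖ ≤ Y a) (k : ℕ) :
    |∑ a ∈ range (k + 1), ⟪x a, y (k - a)⟫| ≤ cauchy X Y k := by
  refine (abs_sum_le_sum_abs _ _).trans (sum_le_sum fun a _ => ?_)
  exact (abs_real_inner_le_norm _ _).trans
    (mul_le_mul (hx a) (hy _) (norm_nonneg _) ((norm_nonneg _).trans (hx a)))

theorem IsFPow.abs_le_of_norm_le_mul [InnerProductSpace ℝ E] {x : ℕ → E} {d ν : ℝ}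
    {ρ w P : ℕ → ℝ} (hν : ν ≤ 0) (hρ : ∀ k, 0 ≤ ρ k) (hx : ∀ k, ‖x k‖ ≤ d * ρ k)
    (hw : IsFPow (fun k => (∑ a ∈ range (k + 1), ⟪x a, x (k - a)⟫) / d ^ 2) w ν)
    (hP : IsFPow (fun k => if k = 0 then 1 else -cauchy ρ ρ k) P ν) (k : ℕ) :
    |w k| ≤ P k := by
  refine hw.abs_le hν hP (fun n hn => ?_) k
  have hsum := abs_sum_inner_le_cauchy hx hx n
  rw [cauchy_const_mul_left, cauchy_const_mul_right, ← mul_assoc, ← sq, mul_comm] at hsum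
  rw [if_neg (by omega), neg_neg, abs_div, abs_of_nonneg (sq_nonneg d)]
  exact div_le_of_le_mul₀ (sq_nonneg d) (sum_nonneg fun a _ => mul_nonneg (hρ a) (hρ _)) hsum

lemma norm_smul_sum_smul_le [NormedSpace ℝ E] {c d : ℝ} {w W ρ : ℕ → ℝ} {y : ℕ → E}
    (hc : 0 ≤ c) (hd : 0 ≤ d) (hw : ∀ a, |w a| ≤ W a) (hy : ∀ a, ‖y a‖ ≤ d * ρ a) (k : ℕ) :
    ‖(c / d ^ 3) • ∑ a ∈ range (k + 1), w a • y (k - a)‖ ≤ c / d ^ 2 * cauchy ρ W k := by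
  -- at `d = 0` both sides are the junk value `0`
  have hscale : c / d ^ 3 * d = c / d ^ 2 := by
    rcases eq_or_ne d 0 with rfl | hd0
    · simp
    · field_simp
  rw [norm_smul, Real.norm_eq_abs, abs_of_nonneg (by positivity), ← hscale, mul_assoc,
    cauchy_comm, ← cauchy_const_mul_right]
  exact mul_le_mul_of_nonneg_left (norm_sum_smul_le_cauchy hw hy k) (by positivity)

end Majorants

theorem majorant_gravity_general {N : ℕ} (G : ℝ) (m : Fin N → ℝ)
    (q gser : Fin N → ℕ → EuclideanSpace ℝ (Fin 3))
    (w : Fin N → Fin N → ℕ → ℝ) (ρ P : ℕ → ℝ)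
    (hG : 0 < G) (hm : ∀ j, 0 < m j)
    -- `w i j = (‖q_i − q_j‖²/‖q_i⁰ − q_j⁰‖²)^{−3/2}` as a formal power series
    (hw : ∀ i j : Fin N, i ≠ j →
      IsFPow (fun k =>
        (∑ a ∈ Finset.range (k + 1),
          ⟪q i a - q j a, q i (k - a) - q j (k - a)⟫) / ‖q i 0 - q j 0‖ ^ 2)
        (w i j) (-(3 / 2)))
    -- `gser i` is the coefficient series of `g_i(q) = Σ_{j≠i} G m_j ‖q_i−q_j‖⁻³ (q_j−q_i)`
    (hgser : ∀ i k, gser i k =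
      ∑ j ∈ Finset.univ.erase i, (G * m j / ‖q i 0 - q j 0‖ ^ 3) •
        (∑ a ∈ Finset.range (k + 1), w i j a • (q j (k - a) - q i (k - a))))
    -- `ρ ∈ ℝ₊[[t]]` with constant term 1 majorizes all normalized differences
    (hρpos : ∀ k, 0 ≤ ρ k)
    (hρmaj : ∀ i j : Fin N, i < j → ∀ k, ‖q i k - q j k‖ ≤ ‖q i 0 - q j 0‖ * ρ k)
    -- `P = (2 − ρ²)^{−3/2}` as a formal power series
    (hP : IsFPow (fun k => if k = 0 then 1 else -(cauchy ρ ρ k)) P (-(3 / 2))) :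
    ∀ i, ∀ k, ‖gser i k‖ ≤ Kcoef G m (fun i => q i 0) i * cauchy ρ P k := by
  have hmaj : ∀ i j : Fin N, i ≠ j → ∀ k, ‖q i k - q j k‖ ≤ ‖q i 0 - q j 0‖ * ρ k := by
    intro i j hij k
    rcases hij.lt_or_gt with hlt | hgt
    · exact hρmaj i j hlt k
    · rw [norm_sub_rev (q i k), norm_sub_rev (q i 0)]
      exact hρmaj j i hgt k
  intro i k
  rw [hgser, Kcoef, sum_mul]
  refine (norm_sum_le _ _).trans (sum_le_sum fun j hj => ?_)
  have hij : i ≠ j := (ne_of_mem_erase hj).symm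
  refine norm_smul_sum_smul_le (mul_pos hG (hm j)).le (norm_nonneg _)
    ((hw i j hij).abs_le_of_norm_le_mul (x := fun a => q i a - q j a) (by norm_num) hρpos
      (hmaj i j hij) hP) (fun a => (norm_sub_rev _ _).trans_le (hmaj i j hij a)) k

/-- Majorant for the gravitational acceleration (Lemma 3.1): if the formal power
series solution `(q,v)` of the N-body equations satisfies
`q_i − q_j ⊴ ‖q_i⁰ − q_j⁰‖ ρ` for all `i < j`, with `ρ = 1 + Σ_{k≥1} ρ_k t^k ∈ ℝ₊[[t]]`,
then `g_i(q) ⊴ K_i(q⁰)·ρ·(2 − ρ²)^{−3/2}`. Here `q i`, `v i`, `gser i` are the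
coefficient series of positions, velocities and accelerations; `w i j` is the series
`(‖q_i − q_j‖²/‖q_i⁰ − q_j⁰‖²)^{−3/2}` and `P` is the series `(2 − ρ²)^{−3/2}`. -/
theorem majorant_gravity {N : ℕ} (G : ℝ) (m : Fin N → ℝ)
    (q v gser : Fin N → ℕ → EuclideanSpace ℝ (Fin 3))
    (w : Fin N → Fin N → ℕ → ℝ) (ρ P : ℕ → ℝ)
    (hG : 0 < G) (hm : ∀ j, 0 < m j)
    (hsep : ∀ i j : Fin N, i ≠ j → q i 0 ≠ q j 0)
    -- `w i j = (‖q_i − q_j‖²/‖q_i⁰ − q_j⁰‖²)^{−3/2}` as a formal power series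
    (hw : ∀ i j : Fin N, i ≠ j →
      IsFPow (fun k =>
        (∑ a ∈ Finset.range (k + 1),
          ⟪q i a - q j a, q i (k - a) - q j (k - a)⟫) / ‖q i 0 - q j 0‖ ^ 2)
        (w i j) (-(3 / 2)))
    -- `gser i` is the coefficient series of `g_i(q) = Σ_{j≠i} G m_j ‖q_i−q_j‖⁻³ (q_j−q_i)`
    (hgser : ∀ i k, gser i k =
      ∑ j ∈ Finset.univ.erase i, (G * m j / ‖q i 0 - q j 0‖ ^ 3) •
        (∑ a ∈ Finset.range (k + 1), w i j a • (q j (k - a) - q i (k - a))))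
    -- `(q, v)` is the formal power series solution of the N-body equations
    (hODEq : ∀ i, ∀ k : ℕ, ((k : ℝ) + 1) • q i (k + 1 : ℕ) = v i k)
    (hODEv : ∀ i, ∀ k : ℕ, ((k : ℝ) + 1) • v i (k + 1 : ℕ) = gser i k)
    -- `ρ ∈ ℝ₊[[t]]` with constant term 1 majorizes all normalized differences
    (hρ0 : ρ 0 = 1) (hρpos : ∀ k, 0 ≤ ρ k)
    (hρmaj : ∀ i j : Fin N, i < j → ∀ k, ‖q i k - q j k‖ ≤ ‖q i 0 - q j 0‖ * ρ k)
    -- `P = (2 − ρ²)^{−3/2}` as a formal power series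
    (hP : IsFPow (fun k => if k = 0 then 1 else -(cauchy ρ ρ k)) P (-(3 / 2))) :
    ∀ i, ∀ k, ‖gser i k‖ ≤ Kcoef G m (fun i => q i 0) i * cauchy ρ P k :=
  majorant_gravity_general G m q gser w ρ P hG hm hw hgser hρpos hρmaj hP

end
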